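/- Let ψ : ℝ² → ℝ be real-analytic, 1-periodic in each variable, and satisfy the factorisation hypothesis (FH). Suppose that at some point (x,y) ∈ ℝ² there are integers m,n ≥ 2 such that ∂^k_sψ(x,y) = 0 for all 2 ≤ k < n and ∂^ℓ_tψ(x,y) = 0 for all 2 ≤ ℓ < m (the corresponding condition being vacuous when n = 2 or m = 2). Then ∂^{k,ℓ}ψ(x,y) = 0 for all integers k,ℓ ≥ 1 with k+ℓ < max(m,n). -/

import Mathlib

/-!
Write `∂_s`, `∂_t` for the derivatives along the lines in the directions `(1, 0)` and `(0, 1)`;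
then `pd ψ k l = ∂_s^k ∂_t^l ψ` at every point, with no regularity needed. Directional
derivatives of an analytic function commute, so near the point (FH) turns `∂_s^{k+1} ∂_t^{l+1} ψ`
into `∂_s^k ∂_t^l (K · ∂_s² ψ)`. By the Leibniz rule this vanishes at the point once every
`∂_s^a ∂_t^b ∂_s² ψ = ∂^{a+2,b} ψ` with `a ≤ k`, `b ≤ l` does: for `b = 0` these are the pure
derivatives assumed to vanish, for `b ≥ 1` they are covered by induction on `l`. This proves the
claim for `k + l < n`; the factorisation through `ψ_tt`, with `s` and `t` exchanged, gives it for
`k + l < m`.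
-/

open MeasureTheory Filter

/-- mixed partial derivative ∂^{k,ℓ}ψ = ∂^{k+ℓ}ψ/∂s^k∂t^ℓ. -/
noncomputable def pd (ψ : ℝ → ℝ → ℝ) (k l : ℕ) (s t : ℝ) : ℝ :=
  iteratedDeriv k (fun s' => iteratedDeriv l (ψ s') t) s

/-- The factorisation hypothesis (FH) for a scalar function ψ on ℝ². -/
def FH1 (ψ : ℝ → ℝ → ℝ) : Prop :=
  ∀ p : ℝ × ℝ, ∃ U : Set (ℝ × ℝ), IsOpen U ∧ p ∈ U ∧
    ∃ K L : ℝ × ℝ → ℝ,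
      (∀ q ∈ U, AnalyticAt ℝ K q) ∧ (∀ q ∈ U, AnalyticAt ℝ L q) ∧
      ∀ q ∈ U, pd ψ 1 1 q.1 q.2 = K q * pd ψ 2 0 q.1 q.2 ∧
               pd ψ 1 1 q.1 q.2 = L q * pd ψ 0 2 q.1 q.2

open Set Topology Function

section DirDeriv

variable {𝕜 : Type*} [NontriviallyNormedField 𝕜] {E : Type*} [NormedAddCommGroup E]
  [NormedSpace 𝕜 E]

variable (𝕜) in
noncomputable def dirDeriv (v : E) (F : E → 𝕜) : E → 𝕜 := fun x => lineDeriv 𝕜 F x v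

variable {U : Set E} {F G : E → 𝕜} {v w : E}

theorem dirDeriv_apply_add_smul (G : E → 𝕜) (v x : E) (τ : 𝕜) :
    dirDeriv 𝕜 v G (x + τ • v) = deriv (fun σ => G (x + σ • v)) τ := by
  have h : (fun ρ : 𝕜 => G (x + τ • v + ρ • v)) = fun ρ => G (x + (ρ + τ) • v) := by
    funext ρ; rw [add_smul, add_comm (ρ • v), add_assoc]
  rw [dirDeriv, lineDeriv, h, deriv_comp_add_const (f := fun σ => G (x + σ • v)), zero_add]

theorem iterate_dirDeriv_apply_add_smul (k : ℕ) (G : E → 𝕜) (v x : E) (τ : 𝕜) :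
    (dirDeriv 𝕜 v)^[k] G (x + τ • v) = deriv^[k] (fun σ => G (x + σ • v)) τ := by
  induction k generalizing G τ with
  | zero => rfl
  | succ k ih =>
    rw [iterate_succ_apply, ih, iterate_succ_apply]
    exact congrArg (deriv^[k] · τ) (funext fun σ => dirDeriv_apply_add_smul G v x σ)

theorem dirDeriv_congr_of_eqOn (hU : IsOpen U) (h : EqOn F G U) :
    EqOn (dirDeriv 𝕜 v F) (dirDeriv 𝕜 v G) U := fun _ hx =>
  Filter.EventuallyEq.lineDeriv_eq (eventually_of_mem (hU.mem_nhds hx) h)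

theorem iterate_dirDeriv_congr_of_eqOn (hU : IsOpen U) (h : EqOn F G U) (k : ℕ) :
    EqOn ((dirDeriv 𝕜 v)^[k] F) ((dirDeriv 𝕜 v)^[k] G) U := by
  induction k with
  | zero => exact h
  | succ k ih => simpa only [iterate_succ_apply'] using dirDeriv_congr_of_eqOn hU ih

theorem dirDeriv_eqOn_fderiv (hF : DifferentiableOn 𝕜 F U) (hU : IsOpen U) :
    EqOn (dirDeriv 𝕜 v F) (fun x => fderiv 𝕜 F x v) U := fun x hx =>
  ((hF x hx).differentiableAt (hU.mem_nhds hx)).lineDeriv_eq_fderiv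

theorem dirDeriv_add {x : E} (hF : DifferentiableAt 𝕜 F x) (hG : DifferentiableAt 𝕜 G x) :
    dirDeriv 𝕜 v (F + G) x = dirDeriv 𝕜 v F x + dirDeriv 𝕜 v G x := by
  simp only [dirDeriv, ((hF.hasFDerivAt.add hG.hasFDerivAt).hasLineDerivAt v).lineDeriv,
    (hF.hasFDerivAt.hasLineDerivAt v).lineDeriv, (hG.hasFDerivAt.hasLineDerivAt v).lineDeriv,
    add_apply]

theorem dirDeriv_mul {x : E} (hF : DifferentiableAt 𝕜 F x) (hG : DifferentiableAt 𝕜 G x) :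
    dirDeriv 𝕜 v (F * G) x = dirDeriv 𝕜 v F x * G x + F x * dirDeriv 𝕜 v G x := by
  simp only [dirDeriv, ((hF.hasFDerivAt.mul hG.hasFDerivAt).hasLineDerivAt v).lineDeriv,
    (hF.hasFDerivAt.hasLineDerivAt v).lineDeriv, (hG.hasFDerivAt.hasLineDerivAt v).lineDeriv,
    add_apply, smul_apply, smul_eq_mul]
  ring

variable [CompleteSpace 𝕜]

theorem analyticOnNhd_dirDeriv (hF : AnalyticOnNhd 𝕜 F U) (hU : IsOpen U) :
    AnalyticOnNhd 𝕜 (dirDeriv 𝕜 v F) U := by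
  intro x hx
  have : AnalyticAt 𝕜 (fun y => fderiv 𝕜 F y v) x :=
    ((ContinuousLinearMap.apply 𝕜 𝕜 v).analyticAt _).comp (hF x hx).fderiv
  exact this.congr (eventually_of_mem (hU.mem_nhds hx)
    (dirDeriv_eqOn_fderiv hF.differentiableOn hU).symm)

theorem analyticOnNhd_iterate_dirDeriv (hF : AnalyticOnNhd 𝕜 F U) (hU : IsOpen U) (k : ℕ) :
    AnalyticOnNhd 𝕜 ((dirDeriv 𝕜 v)^[k] F) U := by
  induction k with
  | zero => exact hF
  | succ k ih => simpa only [iterate_succ_apply'] using analyticOnNhd_dirDeriv ih hU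

theorem dirDeriv_dirDeriv_eq_fderiv_fderiv (hF : AnalyticOnNhd 𝕜 F U) (hU : IsOpen U) {x : E}
    (hx : x ∈ U) : dirDeriv 𝕜 v (dirDeriv 𝕜 w F) x = fderiv 𝕜 (fderiv 𝕜 F) x v w := by
  have hF₂ := (hF x hx).fderiv.differentiableAt.hasFDerivAt
  have hFw : dirDeriv 𝕜 w F =ᶠ[𝓝 x] fun y => fderiv 𝕜 F y w :=
    eventually_of_mem (hU.mem_nhds hx) (dirDeriv_eqOn_fderiv hF.differentiableOn hU)
  have hFw' : HasFDerivAt (fun y => fderiv 𝕜 F y w)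
      ((ContinuousLinearMap.apply 𝕜 𝕜 w).comp (fderiv 𝕜 (fderiv 𝕜 F) x)) x :=
    (ContinuousLinearMap.apply 𝕜 𝕜 w).hasFDerivAt.comp x hF₂
  rw [dirDeriv, hFw.lineDeriv_eq, (hFw'.hasLineDerivAt v).lineDeriv]
  rfl

theorem dirDeriv_comm (hF : AnalyticOnNhd 𝕜 F U) (hU : IsOpen U) :
    EqOn (dirDeriv 𝕜 v (dirDeriv 𝕜 w F)) (dirDeriv 𝕜 w (dirDeriv 𝕜 v F)) U := fun x hx => by
  rw [dirDeriv_dirDeriv_eq_fderiv_fderiv hF hU hx, dirDeriv_dirDeriv_eq_fderiv_fderiv hF hU hx,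
    (hF x hx).contDiffAt.isSymmSndFDerivAt_of_omega.eq]

theorem iterate_dirDeriv_add_eqOn (hF : AnalyticOnNhd 𝕜 F U) (hG : AnalyticOnNhd 𝕜 G U)
    (hU : IsOpen U) (k : ℕ) :
    EqOn ((dirDeriv 𝕜 v)^[k] (F + G)) ((dirDeriv 𝕜 v)^[k] F + (dirDeriv 𝕜 v)^[k] G) U := by
  induction k with
  | zero => exact fun _ _ => rfl
  | succ k ih =>
    intro x hx
    simp only [iterate_succ_apply']
    rw [dirDeriv_congr_of_eqOn hU ih hx]
    exact dirDeriv_add (analyticOnNhd_iterate_dirDeriv hF hU k x hx).differentiableAt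
      (analyticOnNhd_iterate_dirDeriv hG hU k x hx).differentiableAt

theorem dirDeriv_iterate_comm (hF : AnalyticOnNhd 𝕜 F U) (hU : IsOpen U) (l : ℕ) :
    EqOn (dirDeriv 𝕜 v ((dirDeriv 𝕜 w)^[l] F)) ((dirDeriv 𝕜 w)^[l] (dirDeriv 𝕜 v F)) U := by
  induction l generalizing F with
  | zero => exact fun _ _ => rfl
  | succ l ih =>
    simp only [iterate_succ_apply]
    exact (ih (analyticOnNhd_dirDeriv hF hU)).trans
      (iterate_dirDeriv_congr_of_eqOn hU (dirDeriv_comm hF hU) l)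

theorem iterate_dirDeriv_comm (hF : AnalyticOnNhd 𝕜 F U) (hU : IsOpen U) (k l : ℕ) :
    EqOn ((dirDeriv 𝕜 v)^[k] ((dirDeriv 𝕜 w)^[l] F)) ((dirDeriv 𝕜 w)^[l] ((dirDeriv 𝕜 v)^[k] F))
      U := by
  induction k generalizing F with
  | zero => exact fun _ _ => rfl
  | succ k ih =>
    simp only [iterate_succ_apply]
    exact (iterate_dirDeriv_congr_of_eqOn hU (dirDeriv_iterate_comm hF hU l) k).trans
      (ih (analyticOnNhd_dirDeriv hF hU))

theorem iterate_dirDeriv_dirDeriv_mul_eqOn (hF : AnalyticOnNhd 𝕜 F U)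
    (hG : AnalyticOnNhd 𝕜 G U) (hU : IsOpen U) (k : ℕ) :
    EqOn ((dirDeriv 𝕜 v)^[k] (dirDeriv 𝕜 w (F * G)))
      ((dirDeriv 𝕜 v)^[k] (dirDeriv 𝕜 w F * G) + (dirDeriv 𝕜 v)^[k] (F * dirDeriv 𝕜 w G)) U := by
  have hFG : EqOn (dirDeriv 𝕜 w (F * G)) (dirDeriv 𝕜 w F * G + F * dirDeriv 𝕜 w G) U :=
    fun y hy => dirDeriv_mul (hF y hy).differentiableAt (hG y hy).differentiableAt
  have hF'G : AnalyticOnNhd 𝕜 (dirDeriv 𝕜 w F * G) U := (analyticOnNhd_dirDeriv hF hU).mul hG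
  have hFG' : AnalyticOnNhd 𝕜 (F * dirDeriv 𝕜 w G) U := hF.mul (analyticOnNhd_dirDeriv hG hU)
  exact (iterate_dirDeriv_congr_of_eqOn hU hFG k).trans (iterate_dirDeriv_add_eqOn hF'G hFG' hU k)

theorem iterate_dirDeriv_mul_eq_zero (hF : AnalyticOnNhd 𝕜 F U) (hG : AnalyticOnNhd 𝕜 G U)
    (hU : IsOpen U) {x : E} (hx : x ∈ U) (a : ℕ)
    (hGx : ∀ a' ≤ a, (dirDeriv 𝕜 v)^[a'] G x = 0) : (dirDeriv 𝕜 v)^[a] (F * G) x = 0 := by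
  induction a generalizing F G with
  | zero => exact mul_eq_zero_of_right _ (hGx 0 le_rfl)
  | succ a ih =>
    rw [iterate_succ_apply, iterate_dirDeriv_dirDeriv_mul_eqOn hF hG hU a hx, Pi.add_apply,
      ih (analyticOnNhd_dirDeriv hF hU) hG fun a' ha' => hGx a' (by omega),
      ih hF (analyticOnNhd_dirDeriv hG hU) fun a' ha' => hGx (a' + 1) (by omega), add_zero]

theorem iterate_iterate_dirDeriv_mul_eq_zero (hF : AnalyticOnNhd 𝕜 F U)
    (hG : AnalyticOnNhd 𝕜 G U) (hU : IsOpen U) {x : E} (hx : x ∈ U) (a b : ℕ)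
    (hGx : ∀ a' ≤ a, ∀ b' ≤ b, (dirDeriv 𝕜 v)^[a'] ((dirDeriv 𝕜 w)^[b'] G) x = 0) :
    (dirDeriv 𝕜 v)^[a] ((dirDeriv 𝕜 w)^[b] (F * G)) x = 0 := by
  induction b generalizing F G with
  | zero => exact iterate_dirDeriv_mul_eq_zero hF hG hU hx a fun a' ha' => hGx a' ha' 0 le_rfl
  | succ b ih =>
    have hF' := analyticOnNhd_dirDeriv (v := w) hF hU
    have hG' := analyticOnNhd_dirDeriv (v := w) hG hU
    have hF'G : AnalyticOnNhd 𝕜 (dirDeriv 𝕜 w F * G) U := hF'.mul hG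
    have hFG' : AnalyticOnNhd 𝕜 (F * dirDeriv 𝕜 w G) U := hF.mul hG'
    rw [iterate_succ_apply,
      iterate_dirDeriv_congr_of_eqOn hU (iterate_dirDeriv_dirDeriv_mul_eqOn hF hG hU b) a hx,
      iterate_dirDeriv_add_eqOn (analyticOnNhd_iterate_dirDeriv hF'G hU b)
        (analyticOnNhd_iterate_dirDeriv hFG' hU b) hU a hx, Pi.add_apply,
      ih hF' hG fun a' ha' b' hb' => hGx a' ha' b' (by omega),
      ih hF hG' fun a' ha' b' hb' => hGx a' ha' (b' + 1) (by omega), add_zero]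

theorem iterate_iterate_dirDeriv_eq_zero_of_factorization {K : E → 𝕜} (hF : AnalyticOnNhd 𝕜 F U)
    (hK : AnalyticOnNhd 𝕜 K U) (hU : IsOpen U) {x : E} (hx : x ∈ U)
    (hFK : EqOn (dirDeriv 𝕜 v (dirDeriv 𝕜 w F)) (K * dirDeriv 𝕜 v (dirDeriv 𝕜 v F)) U) {n : ℕ}
    (hFx : ∀ k, 2 ≤ k → k < n → (dirDeriv 𝕜 v)^[k] F x = 0) (k l : ℕ) (hk : 1 ≤ k)
    (hl : 1 ≤ l) (hkl : k + l < n) : (dirDeriv 𝕜 v)^[k] ((dirDeriv 𝕜 w)^[l] F) x = 0 := by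
  induction l using Nat.strong_induction_on generalizing k with
  | _ l ih =>
  obtain ⟨k, rfl⟩ : ∃ k', k = k' + 1 := ⟨k - 1, by omega⟩
  obtain ⟨l, rfl⟩ : ∃ l', l = l' + 1 := ⟨l - 1, by omega⟩
  have hFvv := analyticOnNhd_dirDeriv (v := v) (analyticOnNhd_dirDeriv (v := v) hF hU) hU
  have hvanish : ∀ a ≤ k, ∀ b ≤ l,
      (dirDeriv 𝕜 v)^[a] ((dirDeriv 𝕜 w)^[b] (dirDeriv 𝕜 v (dirDeriv 𝕜 v F))) x = 0 := by
    intro a ha b hb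
    rw [iterate_dirDeriv_comm hFvv hU a b hx]
    change (dirDeriv 𝕜 w)^[b] ((dirDeriv 𝕜 v)^[a + 2] F) x = 0
    rw [← iterate_dirDeriv_comm hF hU (a + 2) b hx]
    rcases Nat.eq_zero_or_pos b with rfl | hb₀
    · exact hFx (a + 2) (by omega) (by omega)
    · exact ih b (by omega) (a + 2) (by omega) hb₀ (by omega)
  have hcomm : EqOn (dirDeriv 𝕜 v ((dirDeriv 𝕜 w)^[l] (dirDeriv 𝕜 w F)))
      ((dirDeriv 𝕜 w)^[l] (dirDeriv 𝕜 v (dirDeriv 𝕜 w F))) U :=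
    dirDeriv_iterate_comm (analyticOnNhd_dirDeriv hF hU) hU l
  rw [iterate_succ_apply, iterate_succ_apply,
    iterate_dirDeriv_congr_of_eqOn hU hcomm k hx,
    iterate_dirDeriv_congr_of_eqOn hU (iterate_dirDeriv_congr_of_eqOn hU hFK l) k hx]
  exact iterate_iterate_dirDeriv_mul_eq_zero hK hFvv hU hx k l hvanish

end DirDeriv

theorem pd_eq_iterate_dirDeriv (f : ℝ → ℝ → ℝ) (k l : ℕ) (s t : ℝ) :
    pd f k l s t = (dirDeriv ℝ (1, 0))^[k] ((dirDeriv ℝ (0, 1))^[l] (uncurry f)) (s, t) := by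
  have along_fst : ∀ (G : ℝ × ℝ → ℝ) j s t,
      (dirDeriv ℝ (1, 0))^[j] G (s, t) = deriv^[j] (fun s' => G (s', t)) s := by
    intro G j s t
    simpa using iterate_dirDeriv_apply_add_smul j G (1, 0) (0, t) s
  have along_snd : ∀ (G : ℝ × ℝ → ℝ) j s t,
      (dirDeriv ℝ (0, 1))^[j] G (s, t) = deriv^[j] (fun t' => G (s, t')) t := by
    intro G j s t
    simpa using iterate_dirDeriv_apply_add_smul j G (0, 1) (s, 0) t
  simp only [pd, iteratedDeriv_eq_iterate, along_fst, along_snd]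
  rfl

theorem stmt8_general (ψ : ℝ → ℝ → ℝ)
    (hψa : ∀ p : ℝ × ℝ, AnalyticAt ℝ (fun q : ℝ × ℝ => ψ q.1 q.2) p)
    (hFH : FH1 ψ)
    (x y : ℝ) (m n : ℕ)
    (hs : ∀ k : ℕ, 2 ≤ k → k < n → pd ψ k 0 x y = 0)
    (ht : ∀ l : ℕ, 2 ≤ l → l < m → pd ψ 0 l x y = 0) :
    ∀ k l : ℕ, 1 ≤ k → 1 ≤ l → k + l < max m n → pd ψ k l x y = 0 := by
  obtain ⟨U, hU, hxy, K, L, hK, hL, hfac⟩ := hFH (x, y)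
  have hψ : AnalyticOnNhd ℝ (uncurry ψ) U := fun p _ => hψa p
  simp only [pd_eq_iterate_dirDeriv] at hs ht hfac ⊢
  intro k l hk hl hkl
  rcases le_total m n with hmn | hnm
  · exact iterate_iterate_dirDeriv_eq_zero_of_factorization hψ hK hU hxy
      (fun q hq => (hfac q hq).1) hs k l hk hl (by omega)
  · rw [iterate_dirDeriv_comm hψ hU k l hxy]
    exact iterate_iterate_dirDeriv_eq_zero_of_factorization hψ hL hU hxy
      (fun q hq => (dirDeriv_comm hψ hU hq).symm.trans (hfac q hq).2) ht l k hl hk (by omega)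

/-- Under (FH), if all pure derivatives of order < n in s and < m in t (of order ≥ 2)
vanish at (x,y), then all mixed derivatives ∂^{k,ℓ}ψ(x,y) with k,ℓ ≥ 1 and
k+ℓ < max(m,n) vanish. -/
theorem stmt8 (ψ : ℝ → ℝ → ℝ)
    (hψa : ∀ p : ℝ × ℝ, AnalyticAt ℝ (fun q : ℝ × ℝ => ψ q.1 q.2) p)
    (hp1 : ∀ s t : ℝ, ψ (s + 1) t = ψ s t)
    (hp2 : ∀ s t : ℝ, ψ s (t + 1) = ψ s t)
    (hFH : FH1 ψ)
    (x y : ℝ) (m n : ℕ) (hm : 2 ≤ m) (hn : 2 ≤ n)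
    (hs : ∀ k : ℕ, 2 ≤ k → k < n → pd ψ k 0 x y = 0)
    (ht : ∀ l : ℕ, 2 ≤ l → l < m → pd ψ 0 l x y = 0) :
    ∀ k l : ℕ, 1 ≤ k → 1 ≤ l → k + l < max m n → pd ψ k l x y = 0 :=
  stmt8_general ψ hψa hFH x y m n hs ht
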